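/- arXiv:1907.04644 — 3 statements merged into one kernel-verified Lean document; each statement's English description precedes it below -/
import Mathlib

section
/- Let u ∈ ℝ^n with u > 0 entrywise and ‖u‖ = 1, set λ = λ(u) = min_i (𝒜(u)u)_i / u_i, and let (Δ, δ) solve the Newton system at (u,λ). Then the following are equivalent: (i) δ = 0; (ii) r(u,λ) = 0; (iii) Δ = 0. -/
open Matrix Finset

noncomputable def enorm {n : ℕ} (u : Fin n → ℝ) : ℝ := Real.sqrt (∑ i, u i ^ 2)

def IsZMatrix {n : ℕ} (B : Matrix (Fin n) (Fin n) ℝ) : Prop :=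
  ∀ i j, i ≠ j → B i j ≤ 0

def IsIrreducibleMat {n : ℕ} (B : Matrix (Fin n) (Fin n) ℝ) : Prop :=
  ¬ ∃ S : Finset (Fin n), S.Nonempty ∧ S ≠ Finset.univ ∧
    ∀ i ∈ S, ∀ j ∉ S, B i j = 0

def IsNonsingularM {n : ℕ} (B : Matrix (Fin n) (Fin n) ℝ) : Prop :=
  IsZMatrix B ∧ IsUnit B ∧ ∀ i j, 0 ≤ B⁻¹ i j

noncomputable def calA {n : ℕ} (A : Matrix (Fin n) (Fin n) ℝ) (Γ : ℝ) (a : Fin n → ℝ)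
    (u : Fin n → ℝ) : Matrix (Fin n) (Fin n) ℝ :=
  A + Γ • Matrix.diagonal (fun i => 1 - 1 / (a i + u i ^ 2))

noncomputable def rvec {n : ℕ} (A : Matrix (Fin n) (Fin n) ℝ) (Γ : ℝ) (a : Fin n → ℝ)
    (u : Fin n → ℝ) (lam : ℝ) : Fin n → ℝ :=
  calA A Γ a u *ᵥ u - lam • u

noncomputable def Jmat {n : ℕ} (A : Matrix (Fin n) (Fin n) ℝ) (Γ : ℝ) (a : Fin n → ℝ)
    (u : Fin n → ℝ) (lam : ℝ) : Matrix (Fin n) (Fin n) ℝ :=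
  A + (Γ - lam) • (1 : Matrix (Fin n) (Fin n) ℝ)
    - Γ • Matrix.diagonal (fun i => (a i - u i ^ 2) / (a i + u i ^ 2) ^ 2)

noncomputable def lamOf {n : ℕ} [NeZero n] (A : Matrix (Fin n) (Fin n) ℝ) (Γ : ℝ)
    (a : Fin n → ℝ) (u : Fin n → ℝ) : ℝ :=
  ⨅ i, (calA A Γ a u *ᵥ u) i / u i

def NewtonSystem {n : ℕ} (A : Matrix (Fin n) (Fin n) ℝ) (Γ : ℝ) (a : Fin n → ℝ)
    (u : Fin n → ℝ) (lam : ℝ) (Δ : Fin n → ℝ) (δ : ℝ) : Prop :=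
  Jmat A Γ a u lam *ᵥ Δ - δ • u = -rvec A Γ a u lam ∧
  -(u ⬝ᵥ Δ) = -(1/2 * (u ⬝ᵥ u - 1))

/-!
With `λ` the minimal Collatz–Wielandt quotient, the residual `r` is nonnegative and vanishes at
some index. The Jacobian `J` is a Z-matrix with `J u = r + 2Γ u³ / (a + u²)² > 0`, so it obeys a
comparison principle: `J Δ ≤ 0` forces `Δ ≤ 0`, and then `u ⬝ᵥ Δ = 0` (from `‖u‖ = 1`) forces
`Δ = 0`. Each of `δ = 0` and `r = 0` makes `J Δ = δ u - r` one-signed, hence `Δ = 0`; conversely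
`Δ = 0` gives `r = δ u`, and the zero of `r` forces `δ = 0`.
-/

section ZMatrix

variable {n : ℕ} {J : Matrix (Fin n) (Fin n) ℝ} {u x : Fin n → ℝ}

/- At an index `k` maximising `x i / u i = t > 0`, the vector `t • u - x` is nonnegative and
vanishes at `k`, so the sign pattern of `J` makes its image nonpositive at `k`, while
`J *ᵥ (t • u - x) = t • J *ᵥ u - J *ᵥ x` is positive there. -/
theorem IsZMatrix.nonpos_of_mulVec_nonpos (hJ : IsZMatrix J) (hu : ∀ i, 0 < u i)
    (hJu : ∀ i, 0 < (J *ᵥ u) i) (hx : J *ᵥ x ≤ 0) : x ≤ 0 := by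
  by_contra hcon
  obtain ⟨i, hi⟩ : ∃ i, 0 < x i := by simpa [Pi.le_def] using hcon
  obtain ⟨k, -, hk⟩ := Finset.exists_max_image univ (fun j => x j / u j) ⟨i, mem_univ i⟩
  set t := x k / u k
  have ht : 0 < t := (div_pos hi (hu i)).trans_le (hk i (mem_univ i))
  have hy : ∀ j, 0 ≤ (t • u - x) j := fun j => by
    have := (div_le_iff₀ (hu j)).1 (hk j (mem_univ j))
    simp only [Pi.sub_apply, Pi.smul_apply, smul_eq_mul]
    linarith
  have hyk : (t • u - x) k = 0 := by
    simp [t, div_mul_cancel₀ _ (hu k).ne']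
  have hpos : 0 < (J *ᵥ (t • u - x)) k := by
    rw [mulVec_sub, mulVec_smul, Pi.sub_apply, Pi.smul_apply, smul_eq_mul]
    have hxk : (J *ᵥ x) k ≤ 0 := hx k
    nlinarith [mul_pos ht (hJu k)]
  have hnonpos : ∑ j, J k j * (t • u - x) j ≤ 0 := by
    refine Finset.sum_nonpos fun j _ => ?_
    rcases eq_or_ne j k with rfl | hjk
    · simp [hyk]
    · exact mul_nonpos_of_nonpos_of_nonneg (hJ k j hjk.symm) (hy j)
  exact hpos.not_ge hnonpos

theorem eq_zero_of_nonpos_of_dotProduct_eq_zero (hu : ∀ i, 0 < u i) (hx : x ≤ 0)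
    (h : u ⬝ᵥ x = 0) : x = 0 := by
  have hterm := (Finset.sum_eq_zero_iff_of_nonpos
    fun i _ => mul_nonpos_of_nonneg_of_nonpos (hu i).le (hx i)).1 h
  funext i
  exact (mul_eq_zero.1 (hterm i (mem_univ i))).resolve_left (hu i).ne'

theorem IsZMatrix.eq_zero_of_mulVec_nonpos (hJ : IsZMatrix J) (hu : ∀ i, 0 < u i)
    (hJu : ∀ i, 0 < (J *ᵥ u) i) (hx : J *ᵥ x ≤ 0) (h : u ⬝ᵥ x = 0) : x = 0 :=
  eq_zero_of_nonpos_of_dotProduct_eq_zero hu (hJ.nonpos_of_mulVec_nonpos hu hJu hx) h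

theorem IsZMatrix.eq_zero_of_mulVec_eq_smul (hJ : IsZMatrix J) (hu : ∀ i, 0 < u i)
    (hJu : ∀ i, 0 < (J *ᵥ u) i) {c : ℝ} (hx : J *ᵥ x = c • u) (h : u ⬝ᵥ x = 0) :
    x = 0 := by
  rcases le_total c 0 with hc | hc
  · refine hJ.eq_zero_of_mulVec_nonpos hu hJu ?_ h
    rw [hx]
    exact fun i => mul_nonpos_of_nonpos_of_nonneg hc (hu i).le
  · refine neg_eq_zero.1 (hJ.eq_zero_of_mulVec_nonpos hu hJu ?_ ?_)
    · rw [mulVec_neg, hx]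
      exact fun i => neg_nonpos.2 (mul_nonneg hc (hu i).le)
    · rw [dotProduct_neg, h, neg_zero]

end ZMatrix

section NewtonSystem

variable {n : ℕ} {A : Matrix (Fin n) (Fin n) ℝ} {Γ : ℝ} {a u : Fin n → ℝ} {lam : ℝ}

theorem dotProduct_self_eq_sq_enorm (u : Fin n → ℝ) : u ⬝ᵥ u = _root_.enorm u ^ 2 := by
  rw [_root_.enorm, Real.sq_sqrt (Finset.sum_nonneg fun i _ => sq_nonneg (u i))]
  simp only [dotProduct, sq]

theorem rvec_lamOf_nonneg [NeZero n] (hu : ∀ i, 0 < u i) :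
    0 ≤ rvec A Γ a u (lamOf A Γ a u) := fun i => by
  have := (le_div_iff₀ (hu i)).1
    (ciInf_le (Finite.bddBelow_range fun i => (calA A Γ a u *ᵥ u) i / u i) i)
  simp only [rvec, Pi.zero_apply, Pi.sub_apply, Pi.smul_apply, smul_eq_mul, lamOf]
  linarith

theorem exists_rvec_lamOf_eq_zero [NeZero n] (hu : ∀ i, 0 < u i) :
    ∃ m, rvec A Γ a u (lamOf A Γ a u) m = 0 := by
  obtain ⟨m, hm⟩ := exists_eq_ciInf_of_finite (f := fun i => (calA A Γ a u *ᵥ u) i / u i)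
  refine ⟨m, ?_⟩
  rw [rvec, Pi.sub_apply, Pi.smul_apply, smul_eq_mul, lamOf, ← hm, div_mul_cancel₀ _ (hu m).ne',
    sub_self]

theorem IsZMatrix.jmat (hA : IsZMatrix A) : IsZMatrix (Jmat A Γ a u lam) := fun i j hij => by
  simpa [Jmat, one_apply_ne hij, diagonal_apply_ne _ hij] using hA i j hij

/- `J(u, λ)` is the Jacobian of `u ↦ 𝒜(u) u - λ u`; since `s ↦ s (1 - 1 / (a + s²))` has
derivative `1 - (a - s²) / (a + s²)² = (1 - 1 / (a + s²)) + 2 s² / (a + s²)²`,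
applying it to `u` itself gives the residual plus a positive diagonal term. -/
theorem Jmat_mulVec_self :
    Jmat A Γ a u lam *ᵥ u = rvec A Γ a u lam + fun i => 2 * Γ * u i ^ 3 / (a i + u i ^ 2) ^ 2 := by
  funext i
  simp only [Jmat, rvec, calA, sub_mulVec, add_mulVec, smul_mulVec, one_mulVec,
    mulVec_diagonal, Pi.add_apply, Pi.sub_apply, Pi.smul_apply, smul_eq_mul]
  rcases eq_or_ne (a i + u i ^ 2) 0 with hs | hs
  · have : a i - u i ^ 2 = -2 * u i ^ 2 := by linarith
    simp [hs, this]
    ring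
  · field_simp
    ring

theorem Jmat_mulVec_self_pos (ha : ∀ i, 0 < a i) (hΓ : 0 < Γ) (hu : ∀ i, 0 < u i)
    (hr : 0 ≤ rvec A Γ a u lam) (i : Fin n) : 0 < (Jmat A Γ a u lam *ᵥ u) i := by
  rw [Jmat_mulVec_self, Pi.add_apply]
  have := ha i
  have := hu i
  exact add_pos_of_nonneg_of_pos (hr i) (by positivity)

variable {Δ : Fin n → ℝ} {δ : ℝ}

theorem NewtonSystem.mulVec_eq (h : NewtonSystem A Γ a u lam Δ δ) :
    Jmat A Γ a u lam *ᵥ Δ = δ • u - rvec A Γ a u lam := by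
  rw [sub_eq_iff_eq_add.1 h.1, neg_add_eq_sub]

theorem NewtonSystem.dotProduct_eq_zero (h : NewtonSystem A Γ a u lam Δ δ)
    (hu : u ⬝ᵥ u = 1) : u ⬝ᵥ Δ = 0 := by
  simpa [hu] using h.2

end NewtonSystem

theorem stmt_8_general {n : ℕ} [NeZero n] (A : Matrix (Fin n) (Fin n) ℝ) (a : Fin n → ℝ) (Γ : ℝ)
    (ha : ∀ i, 0 < a i) (hΓ : 0 < Γ)
    (hA : IsNonsingularM A)
    (u : Fin n → ℝ) (hu : ∀ i, 0 < u i) (hnorm : _root_.enorm u = 1)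
    (Δ : Fin n → ℝ) (δ : ℝ)
    (hN : NewtonSystem A Γ a u (lamOf A Γ a u) Δ δ) :
    (δ = 0 ↔ rvec A Γ a u (lamOf A Γ a u) = 0) ∧
    (rvec A Γ a u (lamOf A Γ a u) = 0 ↔ Δ = 0) := by
  set r := rvec A Γ a u (lamOf A Γ a u)
  have hJ : IsZMatrix (Jmat A Γ a u (lamOf A Γ a u)) := hA.1.jmat
  have hr : 0 ≤ r := rvec_lamOf_nonneg hu
  obtain ⟨m, hrm⟩ := exists_rvec_lamOf_eq_zero (A := A) (Γ := Γ) (a := a) hu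
  have hJu := Jmat_mulVec_self_pos ha hΓ hu hr
  have hJΔ : Jmat A Γ a u (lamOf A Γ a u) *ᵥ Δ = δ • u - r := hN.mulVec_eq
  have huΔ := hN.dotProduct_eq_zero (by rw [dotProduct_self_eq_sq_enorm, hnorm, one_pow])
  have hΔ_of_δ (hδ : δ = 0) : Δ = 0 :=
    hJ.eq_zero_of_mulVec_nonpos hu hJu (by simpa [hJΔ, hδ] using hr) huΔ
  have hΔ_of_r (hr0 : r = 0) : Δ = 0 :=
    hJ.eq_zero_of_mulVec_eq_smul hu hJu (by rw [hJΔ, hr0, sub_zero]) huΔ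
  have hδ_of_Δ (hΔ : Δ = 0) : δ = 0 := by
    have hm := congrFun hJΔ m
    simp only [hΔ, mulVec_zero, Pi.zero_apply, Pi.sub_apply, Pi.smul_apply, smul_eq_mul] at hm
    exact (mul_eq_zero.1 (by linarith)).resolve_right (hu m).ne'
  have hr_of_Δ (hΔ : Δ = 0) : r = 0 := by
    simpa [hΔ, hδ_of_Δ hΔ] using hJΔ.symm
  exact ⟨⟨fun hδ => hr_of_Δ (hΔ_of_δ hδ), fun hr0 => hδ_of_Δ (hΔ_of_r hr0)⟩, hΔ_of_r, hr_of_Δ⟩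

theorem stmt_8 {n : ℕ} [NeZero n] (A : Matrix (Fin n) (Fin n) ℝ) (a : Fin n → ℝ) (Γ : ℝ)
    (ha : ∀ i, 0 < a i) (hΓ : 0 < Γ)
    (hA : IsNonsingularM A) (hAirr : IsIrreducibleMat A)
    (u : Fin n → ℝ) (hu : ∀ i, 0 < u i) (hnorm : _root_.enorm u = 1)
    (Δ : Fin n → ℝ) (δ : ℝ)
    (hN : NewtonSystem A Γ a u (lamOf A Γ a u) Δ δ) :
    (δ = 0 ↔ rvec A Γ a u (lamOf A Γ a u) = 0) ∧
    (rvec A Γ a u (lamOf A Γ a u) = 0 ↔ Δ = 0) :=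
  stmt_8_general A a Γ ha hΓ hA u hu hnorm Δ δ hN
end

section
/- Let (u*, λ*) be an eigenpair with u* > 0 entrywise, ‖u*‖ = 1, and 𝒜(u*)u* = λ* u*. Then J(u*, λ*) is a Z-matrix with J(u*,λ*)u* > 0 entrywise, J(u*,λ*) is invertible with entrywise nonnegative inverse, u*^T J(u*,λ*)^{-1} u* > 0, and the (n+1)×(n+1) block matrix F'(u*,λ*) = [[J(u*,λ*), −u*],[−u*^T, 0]] is invertible. -/
open Matrix Finset

noncomputable def enorm' {n : ℕ} (u : Fin n → ℝ) : ℝ := Real.sqrt (∑ i, u i ^ 2)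

/-!
At an eigenpair, `J(u*, λ*)` differs from `𝒜(u*) - λ* I` by the positive diagonal
`Γ diag(2 u_i² / (a_i + u_i²)²)`, so `J u* = (2 Γ u_i³ / (a_i + u_i²)²)_i > 0`; off the diagonal
`J` agrees with the Z-matrix `A`. A Z-matrix sending a positive vector to a positive vector is
monotone (`J x ≥ 0 → x ≥ 0`), which yields invertibility, `J⁻¹ ≥ 0` and `u*ᵀ J⁻¹ u* > 0`. The
last number is minus the Schur complement of `J` in `F'(u*, λ*)`, so `F'` is invertible.
-/

namespace IsZMatrix

variable {n : ℕ} {J : Matrix (Fin n) (Fin n) ℝ}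

lemma mulVec_apply_nonpos (hJ : IsZMatrix J) {z : Fin n → ℝ} (hz : 0 ≤ z) {i : Fin n}
    (hzi : z i = 0) : (J *ᵥ z) i ≤ 0 := by
  rw [mulVec, dotProduct]
  refine Finset.sum_nonpos fun j _ => ?_
  rcases eq_or_ne i j with rfl | hij
  · simp [hzi]
  · exact mul_nonpos_of_nonpos_of_nonneg (hJ i j hij) (hz j)

lemma nonneg_of_mulVec_nonneg (hJ : IsZMatrix J) {u : Fin n → ℝ} (hu : ∀ i, 0 < u i)
    (hJu : ∀ i, 0 < (J *ᵥ u) i) {x : Fin n → ℝ} (hx : 0 ≤ J *ᵥ x) : 0 ≤ x := by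
  rcases isEmpty_or_nonempty (Fin n) with h | h
  · exact fun i => h.elim i
  -- Shift `x` by the largest multiple `t • u` lying below it; the shifted vector touches zero
  -- at some `i₀`, where the Z-sign pattern forces `(J *ᵥ (x - t • u)) i₀ ≤ 0`, so `t ≥ 0`.
  obtain ⟨i₀, -, hmin⟩ := Finset.exists_min_image Finset.univ (fun i => x i / u i)
    Finset.univ_nonempty
  set t := x i₀ / u i₀
  have hle : ∀ j, t * u j ≤ x j := fun j => (le_div_iff₀ (hu j)).1 (hmin j (mem_univ j))
  have ht : 0 ≤ t := by
    by_contra! ht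
    have hpos : 0 < (J *ᵥ (x - t • u)) i₀ := by
      rw [mulVec_sub, mulVec_smul, Pi.sub_apply, Pi.smul_apply, smul_eq_mul]
      have hxi₀ : 0 ≤ (J *ᵥ x) i₀ := hx i₀
      linarith [mul_neg_of_neg_of_pos ht (hJu i₀)]
    have hnonpos : (J *ᵥ (x - t • u)) i₀ ≤ 0 :=
      hJ.mulVec_apply_nonpos (fun j => by simpa using hle j)
        (by simp [t, div_mul_cancel₀ _ (hu i₀).ne'])
    linarith
  exact fun i => le_trans (mul_nonneg ht (hu i).le) (hle i)

lemma isUnit_of_mulVec_pos (hJ : IsZMatrix J) {u : Fin n → ℝ} (hu : ∀ i, 0 < u i)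
    (hJu : ∀ i, 0 < (J *ᵥ u) i) : IsUnit J := by
  refine mulVec_injective_iff_isUnit.1 fun x y hxy => ?_
  have hsub : J *ᵥ (x - y) = 0 := by rw [mulVec_sub, hxy, sub_self]
  have h₁ := hJ.nonneg_of_mulVec_nonneg hu hJu (x := x - y) hsub.ge
  have h₂ := hJ.nonneg_of_mulVec_nonneg hu hJu (x := y - x)
    (by rw [← neg_sub, mulVec_neg, hsub, neg_zero])
  exact le_antisymm (sub_nonneg.1 h₂) (sub_nonneg.1 h₁)

lemma inv_nonneg_of_mulVec_pos (hJ : IsZMatrix J) {u : Fin n → ℝ} (hu : ∀ i, 0 < u i)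
    (hJu : ∀ i, 0 < (J *ᵥ u) i) (i j : Fin n) : 0 ≤ J⁻¹ i j := by
  have hunit := (isUnit_iff_isUnit_det J).1 (hJ.isUnit_of_mulVec_pos hu hJu)
  have hcol := hJ.nonneg_of_mulVec_nonneg hu hJu (x := J⁻¹ *ᵥ Pi.single j 1)
    (by rw [mulVec_mulVec, mul_nonsing_inv _ hunit, one_mulVec]
        exact Pi.single_nonneg.2 zero_le_one)
  simpa [mulVec_single_one] using hcol i

lemma dotProduct_inv_mulVec_pos [NeZero n] (hJ : IsZMatrix J) {u : Fin n → ℝ}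
    (hu : ∀ i, 0 < u i) (hJu : ∀ i, 0 < (J *ᵥ u) i) :
    0 < u ⬝ᵥ J⁻¹ *ᵥ u := by
  have hunit := (isUnit_iff_isUnit_det J).1 (hJ.isUnit_of_mulVec_pos hu hJu)
  have hJy : J *ᵥ (J⁻¹ *ᵥ u) = u := by rw [mulVec_mulVec, mul_nonsing_inv _ hunit, one_mulVec]
  have hy : 0 ≤ J⁻¹ *ᵥ u :=
    hJ.nonneg_of_mulVec_nonneg hu hJu (by rw [hJy]; exact fun i => (hu i).le)
  obtain ⟨i, hi⟩ : ∃ i, (J⁻¹ *ᵥ u) i ≠ 0 := by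
    by_contra! h
    rw [show J⁻¹ *ᵥ u = 0 from funext h, mulVec_zero] at hJy
    exact (hu 0).ne' (congrFun hJy 0).symm
  exact Finset.sum_pos' (fun j _ => mul_nonneg (hu j).le (hy j))
    ⟨i, mem_univ i, mul_pos (hu i) ((hy i).lt_of_ne' hi)⟩

end IsZMatrix

lemma det_fromBlocks_replicateCol_replicateRow_zero {m ι R : Type*} [Fintype m] [DecidableEq m]
    [Fintype ι] [DecidableEq ι] [Unique ι] [CommRing R] {J : Matrix m m R} (hJ : IsUnit J.det)
    (v w : m → R) :
    (fromBlocks J (replicateCol ι v) (replicateRow ι w) 0).det = -(J.det * (w ⬝ᵥ J⁻¹ *ᵥ v)) := by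
  let := J.invertibleOfIsUnitDet hJ
  rw [det_fromBlocks₁₁, det_unique (n := ι), invOf_eq_nonsing_inv, Matrix.mul_assoc,
    ← replicateCol_mulVec, Matrix.sub_apply, replicateRow_mul_replicateCol_apply,
    Matrix.zero_apply, zero_sub, mul_neg]

lemma isZMatrix_Jmat {n : ℕ} {A : Matrix (Fin n) (Fin n) ℝ} (hA : IsZMatrix A) (Γ : ℝ)
    (a u : Fin n → ℝ) (lam : ℝ) : IsZMatrix (Jmat A Γ a u lam) := by
  intro i j hij
  simpa [Jmat, one_apply_ne hij, diagonal_apply_ne _ hij] using hA i j hij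

lemma Jmat_eq_calA_sub_add_diagonal {n : ℕ} (A : Matrix (Fin n) (Fin n) ℝ) (Γ : ℝ)
    {a : Fin n → ℝ} (ha : ∀ i, 0 < a i) (u : Fin n → ℝ) (lam : ℝ) :
    Jmat A Γ a u lam = calA A Γ a u - lam • 1
      + Γ • diagonal (fun i => 2 * u i ^ 2 / (a i + u i ^ 2) ^ 2) := by
  ext i j
  rcases eq_or_ne i j with rfl | hij
  · have : 0 < a i + u i ^ 2 := by positivity [ha i]
    simp only [Jmat, calA, Matrix.sub_apply, Matrix.add_apply, Matrix.smul_apply, one_apply_eq,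
      diagonal_apply_eq, smul_eq_mul]
    field_simp
    ring
  · simp [Jmat, calA, one_apply_ne hij, diagonal_apply_ne _ hij]

lemma Jmat_mulVec_of_eigen {n : ℕ} {A : Matrix (Fin n) (Fin n) ℝ} {Γ : ℝ} {a : Fin n → ℝ}
    (ha : ∀ i, 0 < a i) {u : Fin n → ℝ} {lam : ℝ} (heig : calA A Γ a u *ᵥ u = lam • u)
    (i : Fin n) : (Jmat A Γ a u lam *ᵥ u) i = 2 * Γ * u i ^ 3 / (a i + u i ^ 2) ^ 2 := by
  rw [Jmat_eq_calA_sub_add_diagonal A Γ ha, add_mulVec, sub_mulVec, heig, smul_mulVec,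
    one_mulVec, sub_self, zero_add, smul_mulVec]
  simp only [Pi.smul_apply, mulVec_diagonal, smul_eq_mul]
  ring

theorem stmt_16_general {n : ℕ} (A : Matrix (Fin n) (Fin n) ℝ) (a : Fin n → ℝ) (Γ : ℝ)
    (ha : ∀ i, 0 < a i) (hΓ : 0 < Γ)
    (hA : IsNonsingularM A)
    (ustar : Fin n → ℝ) (lamstar : ℝ)
    (hu : ∀ i, 0 < ustar i) (hnorm : enorm' ustar = 1)
    (heig : calA A Γ a ustar *ᵥ ustar = lamstar • ustar) :
    IsZMatrix (Jmat A Γ a ustar lamstar) ∧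
    (∀ i, 0 < (Jmat A Γ a ustar lamstar *ᵥ ustar) i) ∧
    IsUnit (Jmat A Γ a ustar lamstar) ∧
    (∀ i j, 0 ≤ (Jmat A Γ a ustar lamstar)⁻¹ i j) ∧
    0 < ustar ⬝ᵥ ((Jmat A Γ a ustar lamstar)⁻¹ *ᵥ ustar) ∧
    IsUnit (Matrix.fromBlocks (Jmat A Γ a ustar lamstar)
      (Matrix.replicateCol (Fin 1) (-ustar)) (Matrix.replicateRow (Fin 1) (-ustar)) 0) := by
  have : NeZero n := ⟨by rintro rfl; simp [enorm'] at hnorm⟩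
  set J := Jmat A Γ a ustar lamstar
  have hZ : IsZMatrix J := isZMatrix_Jmat hA.1 Γ a ustar lamstar
  have hJu : ∀ i, 0 < (J *ᵥ ustar) i := fun i => by
    rw [Jmat_mulVec_of_eigen ha heig]
    positivity [hu i, ha i]
  have hunit : IsUnit J := hZ.isUnit_of_mulVec_pos hu hJu
  have hdot : 0 < ustar ⬝ᵥ J⁻¹ *ᵥ ustar := hZ.dotProduct_inv_mulVec_pos hu hJu
  refine ⟨hZ, hJu, hunit, hZ.inv_nonneg_of_mulVec_pos hu hJu, hdot, ?_⟩
  have hdet := (isUnit_iff_isUnit_det J).1 hunit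
  rw [isUnit_iff_isUnit_det, det_fromBlocks_replicateCol_replicateRow_zero hdet, mulVec_neg,
    neg_dotProduct, dotProduct_neg, neg_neg, isUnit_iff_ne_zero]
  exact neg_ne_zero.2 (mul_ne_zero hdet.ne_zero hdot.ne')

theorem stmt_16 {n : ℕ} (A : Matrix (Fin n) (Fin n) ℝ) (a : Fin n → ℝ) (Γ : ℝ)
    (ha : ∀ i, 0 < a i) (hΓ : 0 < Γ)
    (hA : IsNonsingularM A) (hAirr : IsIrreducibleMat A)
    (ustar : Fin n → ℝ) (lamstar : ℝ)
    (hu : ∀ i, 0 < ustar i) (hnorm : enorm' ustar = 1)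
    (heig : calA A Γ a ustar *ᵥ ustar = lamstar • ustar) :
    IsZMatrix (Jmat A Γ a ustar lamstar) ∧
    (∀ i, 0 < (Jmat A Γ a ustar lamstar *ᵥ ustar) i) ∧
    IsUnit (Jmat A Γ a ustar lamstar) ∧
    (∀ i j, 0 ≤ (Jmat A Γ a ustar lamstar)⁻¹ i j) ∧
    0 < ustar ⬝ᵥ ((Jmat A Γ a ustar lamstar)⁻¹ *ᵥ ustar) ∧
    IsUnit (Matrix.fromBlocks (Jmat A Γ a ustar lamstar)
      (Matrix.replicateCol (Fin 1) (-ustar)) (Matrix.replicateRow (Fin 1) (-ustar)) 0) :=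
  stmt_16_general A a Γ ha hΓ hA ustar lamstar hu hnorm heig
end

section
/- Let (u*, λ*) be an eigenpair with u* > 0 entrywise, ‖u*‖ = 1, and 𝒜(u*)u* = λ* u*. Then there exist constants c₂ > 0 and ρ > 0 such that for every u ∈ ℝ^n with u > 0 entrywise, ‖u‖ = 1, and ‖u − u*‖ < ρ, one has |λ(u) − λ*| ≤ c₂·‖u − u*‖. -/
open Matrix Finset

/-! Each coordinate ratio `u ↦ (𝒜(u) u)ᵢ / uᵢ` is differentiable at `u*`, where it equals `λ*`,
so near `u*` it moves by at most a constant times `‖u - u*‖` (the sup norm, which is bounded by the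
Euclidean one). Since `λ(u)` is the minimum of these ratios, it stays within the same distance
of `λ*`. -/

theorem DifferentiableAt.exists_pos_norm_sub_le_mul {E F : Type*} [NormedAddCommGroup E]
    [NormedSpace ℝ E] [NormedAddCommGroup F] [NormedSpace ℝ F] {f : E → F} {x : E}
    (hf : DifferentiableAt ℝ f x) :
    ∃ C > 0, ∃ ρ > 0, ∀ y, ‖y - x‖ < ρ → ‖f y - f x‖ ≤ C * ‖y - x‖ := by
  obtain ⟨C, hC, hbound⟩ := Asymptotics.isBigO_iff'.mp hf.isBigO_sub
  obtain ⟨ρ, hρ, hball⟩ := Metric.eventually_nhds_iff.mp hbound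
  exact ⟨C, hC, ρ, hρ, fun y hy => hball (by rwa [dist_eq_norm])⟩

theorem abs_ciInf_sub_le_of_forall {ι : Type*} [Finite ι] [Nonempty ι] {f : ι → ℝ} {c ε : ℝ}
    (h : ∀ i, |f i - c| ≤ ε) : |(⨅ i, f i) - c| ≤ ε := by
  obtain ⟨i₀⟩ := ‹Nonempty ι›
  have hle : (⨅ i, f i) ≤ f i₀ := ciInf_le (Finite.bddBelow_range f) i₀
  have hge : c - ε ≤ ⨅ i, f i := le_ciInf fun i => by linarith [(abs_le.mp (h i)).1]
  rw [abs_le]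
  constructor <;> linarith [(abs_le.mp (h i₀)).2]

theorem norm_le_enorm {n : ℕ} (v : Fin n → ℝ) : ‖v‖ ≤ _root_.enorm v := by
  refine (pi_norm_le_iff_of_nonneg (Real.sqrt_nonneg _)).mpr fun i => ?_
  rw [Real.norm_eq_abs, ← Real.sqrt_sq_eq_abs]
  exact Real.sqrt_le_sqrt
    (Finset.single_le_sum (f := fun j => v j ^ 2) (fun j _ => sq_nonneg _) (mem_univ i))

theorem calA_mulVec_apply {n : ℕ} (A : Matrix (Fin n) (Fin n) ℝ) (Γ : ℝ) (a u : Fin n → ℝ)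
    (i : Fin n) :
    (calA A Γ a u *ᵥ u) i = (A *ᵥ u) i + Γ * ((1 - 1 / (a i + u i ^ 2)) * u i) := by
  simp only [calA, add_mulVec, smul_mulVec, Pi.add_apply, Pi.smul_apply, mulVec_diagonal,
    smul_eq_mul]

theorem differentiableAt_calA_mulVec_div {n : ℕ} (A : Matrix (Fin n) (Fin n) ℝ) (Γ : ℝ)
    {a u : Fin n → ℝ} (ha : ∀ i, 0 < a i) (hu : ∀ i, u i ≠ 0) :
    DifferentiableAt ℝ (fun v i => (calA A Γ a v *ᵥ v) i / v i) u := by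
  refine differentiableAt_pi.mpr fun i => ?_
  have hden : a i + u i ^ 2 ≠ 0 := (add_pos_of_pos_of_nonneg (ha i) (sq_nonneg _)).ne'
  simp only [calA_mulVec_apply]
  simp only [mulVec, dotProduct]
  have hui := hu i
  fun_prop (disch := assumption)

theorem stmt_18_general {n : ℕ} [NeZero n] (A : Matrix (Fin n) (Fin n) ℝ) (a : Fin n → ℝ) (Γ : ℝ)
    (ha : ∀ i, 0 < a i)
    (ustar : Fin n → ℝ) (lamstar : ℝ)
    (hustar : ∀ i, 0 < ustar i)
    (heig : calA A Γ a ustar *ᵥ ustar = lamstar • ustar) :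
    ∃ (c₂ : ℝ) (ρ : ℝ), 0 < c₂ ∧ 0 < ρ ∧
      ∀ u : Fin n → ℝ, (∀ i, 0 < u i) → _root_.enorm u = 1 → _root_.enorm (u - ustar) < ρ →
        |lamOf A Γ a u - lamstar| ≤ c₂ * _root_.enorm (u - ustar) := by
  set ratio : (Fin n → ℝ) → Fin n → ℝ := fun v i => (calA A Γ a v *ᵥ v) i / v i
  have hratio_star : ratio ustar = fun _ => lamstar := funext fun i => by
    simp only [ratio, heig, Pi.smul_apply, smul_eq_mul, mul_div_cancel_right₀ _ (hustar i).ne']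
  obtain ⟨C, hC, ρ, hρ, hlip⟩ :=
    (differentiableAt_calA_mulVec_div A Γ ha fun i => (hustar i).ne').exists_pos_norm_sub_le_mul
  refine ⟨C, ρ, hC, hρ, fun u _ _ hclose => abs_ciInf_sub_le_of_forall fun i => ?_⟩
  have hsup := norm_le_enorm (u - ustar)
  calc |ratio u i - lamstar| ≤ ‖ratio u - ratio ustar‖ := by
        simpa only [hratio_star, Pi.sub_apply, Real.norm_eq_abs] using
          norm_le_pi_norm (ratio u - ratio ustar) i
    _ ≤ C * ‖u - ustar‖ := hlip u (hsup.trans_lt hclose)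
    _ ≤ C * _root_.enorm (u - ustar) := by gcongr

theorem stmt_18 {n : ℕ} [NeZero n] (A : Matrix (Fin n) (Fin n) ℝ) (a : Fin n → ℝ) (Γ : ℝ)
    (ha : ∀ i, 0 < a i) (hΓ : 0 < Γ)
    (hA : IsNonsingularM A) (hAirr : IsIrreducibleMat A)
    (ustar : Fin n → ℝ) (lamstar : ℝ)
    (hustar : ∀ i, 0 < ustar i) (hnormstar : _root_.enorm ustar = 1)
    (heig : calA A Γ a ustar *ᵥ ustar = lamstar • ustar) :
    ∃ (c₂ : ℝ) (ρ : ℝ), 0 < c₂ ∧ 0 < ρ ∧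
      ∀ u : Fin n → ℝ, (∀ i, 0 < u i) → _root_.enorm u = 1 → _root_.enorm (u - ustar) < ρ →
        |lamOf A Γ a u - lamstar| ≤ c₂ * _root_.enorm (u - ustar) :=
  stmt_18_general A a Γ ha ustar lamstar hustar heig
end
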